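/- arXiv:1310.2912 — 3 statements merged into one kernel-verified Lean document; each statement's English description precedes it below -/
import Mathlib

section
/- Let (X,d) be a metric space, μ₀, μ₁ ∈ X, and let c : [0,1] → X be a curve with c(0) = μ₀, c(1) = μ₁ such that for every ν ∈ X and α ∈ [0,1], d(ν, c(α))² = (1-α)·d(ν,μ₀)² + α·d(ν,μ₁)² - α(1-α)·d(μ₀,μ₁)². Then c is a constant speed geodesic, and any constant speed geodesic c̃ from μ₀ to μ₁ (i.e., d(c̃(α), c̃(β)) = |β-α|·d(μ₀,μ₁) for all α,β ∈ [0,1]) satisfies c̃(α) = c(α) for all α ∈ [0,1]. -/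
theorem stmt_2 {X : Type*} [MetricSpace X] (μ₀ μ₁ : X) (c : ℝ → X)
    (hc0 : c 0 = μ₀) (hc1 : c 1 = μ₁)
    (hid : ∀ ν : X, ∀ α ∈ Set.Icc (0 : ℝ) 1,
      dist ν (c α) ^ 2 = (1 - α) * dist ν μ₀ ^ 2 + α * dist ν μ₁ ^ 2
        - α * (1 - α) * dist μ₀ μ₁ ^ 2) :
    (∀ α ∈ Set.Icc (0 : ℝ) 1, ∀ β ∈ Set.Icc (0 : ℝ) 1,
      dist (c α) (c β) = |β - α| * dist μ₀ μ₁) ∧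
    (∀ ctil : ℝ → X, ctil 0 = μ₀ → ctil 1 = μ₁ →
      (∀ α ∈ Set.Icc (0 : ℝ) 1, ∀ β ∈ Set.Icc (0 : ℝ) 1,
        dist (ctil α) (ctil β) = |β - α| * dist μ₀ μ₁) →
      ∀ α ∈ Set.Icc (0 : ℝ) 1, ctil α = c α) := by
  set D := dist μ₀ μ₁ with hD
  have hDnn : 0 ≤ D := dist_nonneg
  -- distances from endpoints
  have h0 : ∀ β ∈ Set.Icc (0 : ℝ) 1, dist μ₀ (c β) = β * D := by
    intro β hβ
    have h := hid μ₀ β hβ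
    simp only [dist_self] at h
    have hsq : dist μ₀ (c β) ^ 2 = (β * D) ^ 2 := by nlinarith [h]
    have := hβ.1
    nlinarith [dist_nonneg (x := μ₀) (y := c β), mul_nonneg hβ.1 hDnn]
  have h1 : ∀ β ∈ Set.Icc (0 : ℝ) 1, dist μ₁ (c β) = (1 - β) * D := by
    intro β hβ
    have h := hid μ₁ β hβ
    simp only [dist_self] at h
    rw [dist_comm μ₁ μ₀] at h
    nlinarith [dist_nonneg (x := μ₁) (y := c β),
      mul_nonneg (by linarith [hβ.2] : (0:ℝ) ≤ 1 - β) hDnn]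
  have geo : ∀ α ∈ Set.Icc (0 : ℝ) 1, ∀ β ∈ Set.Icc (0 : ℝ) 1,
      dist (c α) (c β) = |β - α| * D := by
    intro α hα β hβ
    have h := hid (c α) β hβ
    have hα0 := h0 α hα
    have hα1 := h1 α hα
    rw [dist_comm μ₀ (c α)] at hα0
    rw [dist_comm μ₁ (c α)] at hα1
    rw [hα0, hα1] at h
    have hsq : dist (c α) (c β) ^ 2 = ((β - α) * D) ^ 2 := by ring_nf; ring_nf at h; linarith
    have habs : dist (c α) (c β) ^ 2 = (|β - α| * D) ^ 2 := by
      rw [hsq, mul_pow, mul_pow, sq_abs]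
    nlinarith [dist_nonneg (x := c α) (y := c β), mul_nonneg (abs_nonneg (β - α)) hDnn]
  refine ⟨geo, ?_⟩
  intro ctil ht0 ht1 hgeo α hα
  have hd0 : dist (ctil α) μ₀ = α * D := by
    have := hgeo α hα 0 (by constructor <;> norm_num)
    rw [ht0] at this
    rw [this]
    rw [abs_of_nonpos (by linarith [hα.1])]
    ring
  have hd1 : dist (ctil α) μ₁ = (1 - α) * D := by
    have := hgeo α hα 1 (by constructor <;> norm_num)
    rw [ht1] at this
    rw [this, abs_of_nonneg (by linarith [hα.2])]
  have h := hid (ctil α) α hα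
  rw [hd0, hd1] at h
  have : dist (ctil α) (c α) ^ 2 = 0 := by rw [h]; ring
  have : dist (ctil α) (c α) = 0 := by
    nlinarith [dist_nonneg (x := ctil α) (y := c α)]
  exact dist_eq_zero.mp this
end

section
/- Let C ≥ 0, 0 < h ≤ τ, and let a : ℕ × ℕ → ℝ be nonnegative and satisfy: (i) a(n,0) ≤ (n²τ² + 2τ²n)·C for all n; (ii) a(0,m) ≤ (m²h² + τhm)·C for all m; (iii) for all n ≥ 1 and m ≥ 0, a(n, m+1) ≤ (h/τ)·a(n-1, m) + ((τ-h)/τ)·a(n, m) + 2h²·C. Then for all n, m ≥ 0, a(n,m) ≤ [(nτ - mh)² + τhm + 2τ²n]·C. -/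
theorem stmt_9 (C h τ : ℝ) (hC : 0 ≤ C) (hh : 0 < h) (hhτ : h ≤ τ)
    (a : ℕ → ℕ → ℝ) (hpos : ∀ n m, 0 ≤ a n m)
    (hbase1 : ∀ n : ℕ, a n 0 ≤ ((n : ℝ) ^ 2 * τ ^ 2 + 2 * τ ^ 2 * n) * C)
    (hbase2 : ∀ m : ℕ, a 0 m ≤ ((m : ℝ) ^ 2 * h ^ 2 + τ * h * m) * C)
    (hrec : ∀ n m : ℕ, 1 ≤ n →
      a n (m + 1) ≤ (h / τ) * a (n - 1) m + ((τ - h) / τ) * a n m + 2 * h ^ 2 * C) :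
    ∀ n m : ℕ, a n m ≤ (((n : ℝ) * τ - m * h) ^ 2 + τ * h * m + 2 * τ ^ 2 * n) * C := by
  have hτ : 0 < τ := lt_of_lt_of_le hh hhτ
  intro n m
  induction m generalizing n with
  | zero =>
    have := hbase1 n
    push_cast
    nlinarith [this]
  | succ m ih =>
    cases n with
    | zero =>
      have := hbase2 (m + 1)
      push_cast at this ⊢
      nlinarith [this]
    | succ n =>
      have h1 := ih n
      have h2 := ih (n + 1)
      have hr := hrec (n + 1) m (by omega)
      simp only [Nat.add_sub_cancel] at hr
      have c1 : 0 ≤ h / τ := by positivity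
      have c2 : 0 ≤ (τ - h) / τ := div_nonneg (by linarith) hτ.le
      have m1 := mul_le_mul_of_nonneg_left h1 c1
      have m2 := mul_le_mul_of_nonneg_left h2 c2
      have key : (h / τ) * ((((n : ℝ)) * τ - m * h) ^ 2 + τ * h * m + 2 * τ ^ 2 * n) * C
          + ((τ - h) / τ) * ((((n : ℝ) + 1) * τ - m * h) ^ 2 + τ * h * m + 2 * τ ^ 2 * (n + 1)) * C
          + 2 * h ^ 2 * C
          ≤ ((((n : ℝ) + 1) * τ - (m + 1) * h) ^ 2 + τ * h * (m + 1) + 2 * τ ^ 2 * (n + 1)) * C := by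
        rw [div_mul_eq_mul_div, div_mul_eq_mul_div, div_mul_eq_mul_div, div_mul_eq_mul_div,
          ← add_div, ← le_sub_iff_add_le, div_le_iff₀ hτ]
        nlinarith [mul_nonneg (mul_nonneg hh.le (by linarith : (0:ℝ) ≤ 2 * τ - h)) hC, hτ]
      push_cast at m1 m2 key ⊢
      nlinarith [hr, m1, m2, key]
end

section
/- Let λ ∈ ℝ with λ ≤ 0, τ > 0 with 1 + λτ > 0, and let K ≥ 0. If A, B, D, E, G ≥ 0 and λτ ∈ (-1,0] satisfy (1+λτ)A² + λτ·D² ≤ E² + (τ²/(1+λτ))·K - G² and D ≤ G + E, then (1+λτ)²A² ≤ E² + τ²K. -/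
theorem stmt_11 (A D E G K lam τ : ℝ)
    (hA : 0 ≤ A) (hD : 0 ≤ D) (hE : 0 ≤ E) (hG : 0 ≤ G) (hK : 0 ≤ K)
    (hτ : 0 < τ) (hl1 : -1 < lam * τ) (hl2 : lam * τ ≤ 0)
    (h1 : (1 + lam * τ) * A ^ 2 + lam * τ * D ^ 2 ≤
      E ^ 2 + (τ ^ 2 / (1 + lam * τ)) * K - G ^ 2)
    (h2 : D ≤ G + E) :
    (1 + lam * τ) ^ 2 * A ^ 2 ≤ E ^ 2 + τ ^ 2 * K := by
  have hs : 0 < 1 + lam * τ := by linarith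
  have hdiv : (τ ^ 2 / (1 + lam * τ)) * (1 + lam * τ) = τ ^ 2 := by
    exact div_mul_cancel₀ _ hs.ne'
  have h1' : (1 + lam * τ) * ((1 + lam * τ) * A ^ 2 + lam * τ * D ^ 2) ≤
      (1 + lam * τ) * (E ^ 2 - G ^ 2) + τ ^ 2 * K := by
    nlinarith [mul_le_mul_of_nonneg_left h1 hs.le]
  -- D^2 ≤ (G+E)^2
  have hD2 : D ^ 2 ≤ (G + E) ^ 2 := by nlinarith
  have hsD : lam * τ * (G + E) ^ 2 ≤ lam * τ * D ^ 2 := by nlinarith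
  have key : ((1 + lam * τ) * G + lam * τ * E) ^ 2 ≥ 0 := sq_nonneg _
  nlinarith [key, hsD, h1']
end
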